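/- Let (E, 𝓔) be a measurable space, let H be a probability measure on E × E, assume F⁰, F̂ are measurable with values in [0,1] and G⁰, Ĝ are measurable with values in [0,1], and define dₙ(θ) = ∬ Δₙ(θ,x,y)² dH(x,y). Then for all θ, θ' ∈ Θ = [δ,1−δ]², |dₙ(θ) − dₙ(θ')| ≤ 16 δ⁻⁴ (|α−α'| + |β−β'|); in particular dₙ is Lipschitz continuous on Θ with respect to the ℓ¹-norm. -/

import Mathlib

/-!
For fixed data, Δₙ(θ, x, y) is a polynomial in the values of F⁰, F̂, G⁰, Ĝ whose coefficients are
built from α, β, p = β/(α+β) and β/α by sums and products. On Θ each building block is bounded and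
Lipschitz for the ℓ¹ distance (p with constant δ⁻¹, β/α with constant δ⁻²), and bounds and
constants propagate through sums and products via |fg − f'g'| ≤ |f − f'||g| + |f'||g − g'|.
Cancelling r against F̂¹_θ = (F̂ − pF⁰)/r first keeps Δₙ bounded by 4 + δ⁻¹ and
(3 + 4δ⁻¹ + 2δ⁻²)-Lipschitz, so Δₙ² is 2(4 + δ⁻¹)(3 + 4δ⁻¹ + 2δ⁻²) ≤ 16δ⁻⁴-Lipschitz as δ < 1/2;
integrating against the probability measure H preserves both the bound and the constant.
-/

open MeasureTheory Set

structure BoundedLipschitzOn {X : Type*} (d : X → X → ℝ) (S : Set X) (M L : ℝ) (f : X → ℝ) :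
    Prop where
  abs_le : ∀ x ∈ S, |f x| ≤ M
  abs_sub_le : ∀ x ∈ S, ∀ y ∈ S, |f x - f y| ≤ L * d x y

namespace BoundedLipschitzOn

variable {X : Type*} {d : X → X → ℝ} {S : Set X} {f g : X → ℝ} {M N L L' : ℝ}

theorem const {c : ℝ} (hc : |c| ≤ M) : BoundedLipschitzOn d S M 0 (fun _ ↦ c) :=
  ⟨fun _ _ ↦ hc, fun _ _ _ _ ↦ by simp⟩

theorem add (hf : BoundedLipschitzOn d S M L f) (hg : BoundedLipschitzOn d S N L' g) :
    BoundedLipschitzOn d S (M + N) (L + L') (fun x ↦ f x + g x) where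
  abs_le x hx := (abs_add_le _ _).trans (add_le_add (hf.abs_le x hx) (hg.abs_le x hx))
  abs_sub_le x hx y hy := by
    calc |f x + g x - (f y + g y)| = |(f x - f y) + (g x - g y)| := by ring_nf
      _ ≤ L * d x y + L' * d x y :=
        (abs_add_le _ _).trans (add_le_add (hf.abs_sub_le x hx y hy) (hg.abs_sub_le x hx y hy))
      _ = (L + L') * d x y := by ring

theorem sub (hf : BoundedLipschitzOn d S M L f) (hg : BoundedLipschitzOn d S N L' g) :
    BoundedLipschitzOn d S (M + N) (L + L') (fun x ↦ f x - g x) where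
  abs_le x hx := (abs_sub _ _).trans (add_le_add (hf.abs_le x hx) (hg.abs_le x hx))
  abs_sub_le x hx y hy := by
    calc |f x - g x - (f y - g y)| = |(f x - f y) - (g x - g y)| := by ring_nf
      _ ≤ L * d x y + L' * d x y :=
        (abs_sub _ _).trans (add_le_add (hf.abs_sub_le x hx y hy) (hg.abs_sub_le x hx y hy))
      _ = (L + L') * d x y := by ring

theorem mul (hf : BoundedLipschitzOn d S M L f) (hg : BoundedLipschitzOn d S N L' g) :
    BoundedLipschitzOn d S (M * N) (M * L' + N * L) (fun x ↦ f x * g x) where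
  abs_le x hx := by
    rw [abs_mul]
    exact mul_le_mul (hf.abs_le x hx) (hg.abs_le x hx) (abs_nonneg _)
      ((abs_nonneg _).trans (hf.abs_le x hx))
  abs_sub_le x hx y hy := by
    have hfy := hf.abs_le y hy
    have hgx := hg.abs_le x hx
    have hfxy := hf.abs_sub_le x hx y hy
    have hgxy := hg.abs_sub_le x hx y hy
    calc |f x * g x - f y * g y| = |(f x - f y) * g x + f y * (g x - g y)| := by ring_nf
      _ ≤ |f x - f y| * |g x| + |f y| * |g x - g y| := by
        rw [← abs_mul, ← abs_mul]; exact abs_add_le _ _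
      _ ≤ L * d x y * N + M * (L' * d x y) := by
        gcongr
        · exact (abs_nonneg _).trans hfxy
        · exact (abs_nonneg _).trans hfy
      _ = (M * L' + N * L) * d x y := by ring

theorem mono (hf : BoundedLipschitzOn d S M L f) (hd : ∀ x ∈ S, ∀ y ∈ S, 0 ≤ d x y)
    {M' L' : ℝ} (hM : M ≤ M') (hL : L ≤ L') : BoundedLipschitzOn d S M' L' f where
  abs_le x hx := (hf.abs_le x hx).trans hM
  abs_sub_le x hx y hy :=
    (hf.abs_sub_le x hx y hy).trans (mul_le_mul_of_nonneg_right hL (hd x hx y hy))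

theorem integral {Ω : Type*} [MeasurableSpace Ω] {μ : Measure Ω} [IsProbabilityMeasure μ]
    {F : X → Ω → ℝ} (hF : ∀ x ∈ S, AEStronglyMeasurable (F x) μ)
    (hFb : ∀ ω, BoundedLipschitzOn d S M L (fun x ↦ F x ω)) :
    BoundedLipschitzOn d S M L (fun x ↦ ∫ ω, F x ω ∂μ) where
  abs_le x hx := by
    simpa using norm_integral_le_of_norm_le_const (μ := μ)
      (ae_of_all _ fun ω ↦ (Real.norm_eq_abs _).trans_le ((hFb ω).abs_le x hx))
  abs_sub_le x hx y hy := by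
    have hint : ∀ z ∈ S, Integrable (F z) μ := fun z hz ↦
      .of_bound (hF z hz) M
        (ae_of_all _ fun ω ↦ (Real.norm_eq_abs _).trans_le ((hFb ω).abs_le z hz))
    rw [← integral_sub (hint x hx) (hint y hy)]
    simpa using norm_integral_le_of_norm_le_const (μ := μ)
      (ae_of_all _ fun ω ↦ (Real.norm_eq_abs _).trans_le ((hFb ω).abs_sub_le x hx y hy))

end BoundedLipschitzOn

theorem abs_div_sub_div_le {a b a' b' : ℝ} (hb : 0 < b) (hb' : b' ≠ 0) :
    |a / b - a' / b'| ≤ (|a - a'| + |a' / b'| * |b - b'|) / b := by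
  have h : a / b - a' / b' = ((a - a') - a' / b' * (b - b')) / b := by field_simp; ring
  rw [h, abs_div, abs_of_pos hb, ← abs_mul]
  exact div_le_div_of_nonneg_right (abs_sub _ _) hb.le

def l1Dist (θ θ' : ℝ × ℝ) : ℝ := |θ.1 - θ'.1| + |θ.2 - θ'.2|

theorem l1Dist_nonneg (θ θ' : ℝ × ℝ) : 0 ≤ l1Dist θ θ' := by unfold l1Dist; positivity

theorem abs_fst_sub_le_l1Dist (θ θ' : ℝ × ℝ) : |θ.1 - θ'.1| ≤ l1Dist θ θ' :=
  le_add_of_nonneg_right (abs_nonneg _)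

theorem abs_snd_sub_le_l1Dist (θ θ' : ℝ × ℝ) : |θ.2 - θ'.2| ≤ l1Dist θ θ' :=
  le_add_of_nonneg_left (abs_nonneg _)

def paramSquare (δ : ℝ) : Set (ℝ × ℝ) := Icc δ (1 - δ) ×ˢ Icc δ (1 - δ)

section paramSquare

variable {δ : ℝ}

theorem mem_unitInterval_of_mem_Icc {x : ℝ} (hδ : 0 ≤ δ) (hx : x ∈ Icc δ (1 - δ)) :
    x ∈ unitInterval :=
  ⟨hδ.trans hx.1, hx.2.trans (by linarith)⟩

theorem boundedLipschitzOn_snd (hδ : 0 ≤ δ) :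
    BoundedLipschitzOn l1Dist (paramSquare δ) 1 1 Prod.snd where
  abs_le _ hθ :=
    have h := mem_unitInterval_of_mem_Icc hδ hθ.2
    (abs_of_nonneg h.1).trans_le h.2
  abs_sub_le θ _ θ' _ := (abs_snd_sub_le_l1Dist θ θ').trans_eq (one_mul _).symm

theorem boundedLipschitzOn_one_sub_fst (hδ : 0 ≤ δ) :
    BoundedLipschitzOn l1Dist (paramSquare δ) 1 1 (fun θ ↦ 1 - θ.1) where
  abs_le _ hθ :=
    have h := mem_unitInterval_of_mem_Icc hδ hθ.1
    abs_sub_le_of_nonneg_of_le zero_le_one le_rfl h.1 h.2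
  abs_sub_le θ _ θ' _ := by
    rw [sub_sub_sub_cancel_left, abs_sub_comm, one_mul]
    exact abs_fst_sub_le_l1Dist θ θ'

theorem boundedLipschitzOn_one_sub_snd (hδ : 0 ≤ δ) :
    BoundedLipschitzOn l1Dist (paramSquare δ) 1 1 (fun θ ↦ 1 - θ.2) where
  abs_le _ hθ :=
    have h := mem_unitInterval_of_mem_Icc hδ hθ.2
    abs_sub_le_of_nonneg_of_le zero_le_one le_rfl h.1 h.2
  abs_sub_le θ _ θ' _ := by
    rw [sub_sub_sub_cancel_left, abs_sub_comm, one_mul]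
    exact abs_snd_sub_le_l1Dist θ θ'

theorem boundedLipschitzOn_snd_div_add (hδ : 0 < δ) :
    BoundedLipschitzOn l1Dist (paramSquare δ) 1 δ⁻¹ (fun θ ↦ θ.2 / (θ.1 + θ.2)) := by
  have hp : ∀ θ ∈ paramSquare δ, 2 * δ ≤ θ.1 + θ.2 ∧ |θ.2 / (θ.1 + θ.2)| ≤ 1 := by
    rintro θ ⟨⟨hα, -⟩, ⟨hβ, -⟩⟩
    refine ⟨by linarith, ?_⟩
    rw [abs_of_nonneg (div_nonneg (by linarith) (by linarith)), div_le_one (by linarith)]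
    linarith
  refine ⟨fun θ hθ ↦ (hp θ hθ).2, fun θ hθ θ' hθ' ↦ ?_⟩
  have hsum : |θ.1 + θ.2 - (θ'.1 + θ'.2)| ≤ l1Dist θ θ' := by
    rw [show θ.1 + θ.2 - (θ'.1 + θ'.2) = (θ.1 - θ'.1) + (θ.2 - θ'.2) by ring]
    exact abs_add_le _ _
  calc |θ.2 / (θ.1 + θ.2) - θ'.2 / (θ'.1 + θ'.2)|
      ≤ (|θ.2 - θ'.2| + |θ'.2 / (θ'.1 + θ'.2)| * |θ.1 + θ.2 - (θ'.1 + θ'.2)|) / (θ.1 + θ.2) :=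
        abs_div_sub_div_le (by linarith [(hp θ hθ).1]) (by linarith [(hp θ' hθ').1])
    _ ≤ (l1Dist θ θ' + 1 * l1Dist θ θ') / (2 * δ) :=
      div_le_div₀ (by linarith [l1Dist_nonneg θ θ'])
        (add_le_add (abs_snd_sub_le_l1Dist θ θ')
          (mul_le_mul (hp θ' hθ').2 hsum (abs_nonneg _) zero_le_one))
        (by positivity) (hp θ hθ).1
    _ = δ⁻¹ * l1Dist θ θ' := by field_simp; ring

theorem boundedLipschitzOn_sub_snd_div_add_mul (hδ : 0 < δ) {x y : ℝ} (hx : x ∈ Icc 0 1)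
    (hy : y ∈ Icc 0 1) :
    BoundedLipschitzOn l1Dist (paramSquare δ) 1 δ⁻¹ (fun θ ↦ x - θ.2 / (θ.1 + θ.2) * y) where
  abs_le θ hθ :=
    have hp : θ.2 / (θ.1 + θ.2) ∈ unitInterval :=
      unitInterval.div_mem (hδ.le.trans hθ.2.1) (by linarith [hθ.1.1, hθ.2.1])
        (by linarith [hθ.1.1])
    have hpy := unitInterval.mul_mem hp hy
    abs_sub_le_of_nonneg_of_le hx.1 hx.2 hpy.1 hpy.2
  abs_sub_le θ hθ θ' hθ' := by
    have h := (boundedLipschitzOn_snd_div_add hδ).abs_sub_le θ hθ θ' hθ'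
    have hy' : |y| ≤ 1 := (abs_of_nonneg hy.1).trans_le hy.2
    calc |x - θ.2 / (θ.1 + θ.2) * y - (x - θ'.2 / (θ'.1 + θ'.2) * y)|
        = |θ.2 / (θ.1 + θ.2) - θ'.2 / (θ'.1 + θ'.2)| * |y| := by
          rw [← abs_mul, ← abs_neg]; ring_nf
      _ ≤ δ⁻¹ * l1Dist θ θ' * 1 :=
        mul_le_mul h hy' (abs_nonneg _) ((abs_nonneg _).trans h)
      _ = δ⁻¹ * l1Dist θ θ' := mul_one _

theorem boundedLipschitzOn_snd_div_fst (hδ : 0 < δ) :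
    BoundedLipschitzOn l1Dist (paramSquare δ) (δ⁻¹ - 1) (δ⁻¹ ^ 2) (fun θ ↦ θ.2 / θ.1) := by
  have hq : ∀ θ ∈ paramSquare δ, δ ≤ θ.1 ∧ |θ.2 / θ.1| ≤ δ⁻¹ - 1 := by
    rintro θ ⟨⟨hα, -⟩, ⟨hβ, hβ₁⟩⟩
    refine ⟨hα, ?_⟩
    rw [abs_of_nonneg (div_nonneg (by linarith) (by linarith)), div_le_iff₀ (by linarith)]
    have hK : 1 ≤ δ⁻¹ := one_le_inv₀ hδ |>.2 (by linarith)
    calc θ.2 ≤ (δ⁻¹ - 1) * δ := by rw [sub_mul, inv_mul_cancel₀ hδ.ne']; linarith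
      _ ≤ (δ⁻¹ - 1) * θ.1 := mul_le_mul_of_nonneg_left hα (by linarith)
  refine ⟨fun θ hθ ↦ (hq θ hθ).2, fun θ hθ θ' hθ' ↦ ?_⟩
  calc |θ.2 / θ.1 - θ'.2 / θ'.1|
      ≤ (|θ.2 - θ'.2| + |θ'.2 / θ'.1| * |θ.1 - θ'.1|) / θ.1 :=
        abs_div_sub_div_le (by linarith [(hq θ hθ).1]) (by linarith [(hq θ' hθ').1])
    _ ≤ (l1Dist θ θ' + (δ⁻¹ - 1) * l1Dist θ θ') / δ :=
      div_le_div₀ (add_nonneg (l1Dist_nonneg _ _)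
          (mul_nonneg ((abs_nonneg _).trans (hq θ' hθ').2) (l1Dist_nonneg _ _)))
        (add_le_add (abs_snd_sub_le_l1Dist θ θ')
          (mul_le_mul (hq θ' hθ').2 (abs_fst_sub_le_l1Dist θ θ') (abs_nonneg _)
            ((abs_nonneg _).trans (hq θ' hθ').2)))
        hδ (hq θ hθ).1
    _ = δ⁻¹ ^ 2 * l1Dist θ θ' := by field_simp; ring

end paramSquare

/-- Δₙ(θ, x, y) for `u = F⁰ x`, `v = F⁰ y`, `s = F̂ x`, `t = F̂ y`, `g₀ = G⁰ (x, y)`,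
`g = Ĝ (x, y)`, with `r` cancelled against every factor `F̂¹_θ` -/
noncomputable def contrastResidual (u v s t g₀ g : ℝ) (θ : ℝ × ℝ) : ℝ :=
  g - (θ.2 / (θ.1 + θ.2) * (1 - θ.1) * g₀ + θ.2 * u * (t - θ.2 / (θ.1 + θ.2) * v)
    + θ.2 * (s - θ.2 / (θ.1 + θ.2) * u) * v
    + (1 - θ.2) * (s + θ.2 / θ.1 * (s - u)) * (t - θ.2 / (θ.1 + θ.2) * v))

theorem contrastResidual_eq {α β : ℝ} (hα : α ≠ 0) (hαβ : α + β ≠ 0) (u v s t g₀ g : ℝ) :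
    g - (β * (1 - α) / (α + β) * g₀
        + α * β / (α + β) * u * ((t - β / (α + β) * v) / (α / (α + β)))
        + α * β / (α + β) * ((s - β / (α + β) * u) / (α / (α + β))) * v
        + α * (1 - β) / (α + β) * ((s - β / (α + β) * u) / (α / (α + β)))
          * ((t - β / (α + β) * v) / (α / (α + β))))
      = contrastResidual u v s t g₀ g (α, β) := by
  unfold contrastResidual
  field_simp
  ring

theorem boundedLipschitzOn_contrastResidual {δ u v s t g₀ g : ℝ} (hδ : 0 < δ)
    (hu : u ∈ Icc 0 1) (hv : v ∈ Icc 0 1) (hs : s ∈ Icc 0 1) (ht : t ∈ Icc 0 1)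
    (hg₀ : g₀ ∈ Icc 0 1) (hg : g ∈ Icc 0 1) :
    BoundedLipschitzOn l1Dist (paramSquare δ) (4 + δ⁻¹) (3 + 4 * δ⁻¹ + 2 * δ⁻¹ ^ 2)
      (contrastResidual u v s t g₀ g) := by
  have hconst : ∀ {x : ℝ}, x ∈ Icc (0 : ℝ) 1 →
      BoundedLipschitzOn l1Dist (paramSquare δ) 1 0 (fun _ ↦ x) :=
    fun hx ↦ .const ((abs_of_nonneg hx.1).trans_le hx.2)
  have hp := boundedLipschitzOn_snd_div_add hδ
  have hq := boundedLipschitzOn_snd_div_fst hδ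
  have hβ := boundedLipschitzOn_snd hδ.le
  have hF1 := (hconst hs).add
    (hq.mul (.const (abs_sub_le_of_nonneg_of_le hs.1 hs.2 hu.1 hu.2)))
  have hT₁ := (hp.mul (boundedLipschitzOn_one_sub_fst hδ.le)).mul (hconst hg₀)
  have hT₂ := (hβ.mul (hconst hu)).mul (boundedLipschitzOn_sub_snd_div_add_mul hδ ht hv)
  have hT₃ := (hβ.mul (boundedLipschitzOn_sub_snd_div_add_mul hδ hs hu)).mul (hconst hv)
  have hT₄ := ((boundedLipschitzOn_one_sub_snd hδ.le).mul hF1).mul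
    (boundedLipschitzOn_sub_snd_div_add_mul hδ ht hv)
  exact ((hconst hg).sub (((hT₁.add hT₂).add hT₃).add hT₄)).mono
    (fun θ _ θ' _ ↦ l1Dist_nonneg θ θ') (le_of_eq (by ring)) (le_of_eq (by ring))

theorem boundedLipschitzOn_contrastResidual_sq {δ u v s t g₀ g : ℝ} (hδ₀ : 0 < δ) (hδ : δ < 1 / 2)
    (hu : u ∈ Icc 0 1) (hv : v ∈ Icc 0 1) (hs : s ∈ Icc 0 1) (ht : t ∈ Icc 0 1)
    (hg₀ : g₀ ∈ Icc 0 1) (hg : g ∈ Icc 0 1) :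
    BoundedLipschitzOn l1Dist (paramSquare δ) ((4 + δ⁻¹) ^ 2) (16 * δ⁻¹ ^ 4)
      (fun θ ↦ contrastResidual u v s t g₀ g θ ^ 2) := by
  have hK : 2 ≤ δ⁻¹ := (le_inv_comm₀ two_pos hδ₀).2 (by linarith)
  have hΔ := boundedLipschitzOn_contrastResidual hδ₀ hu hv hs ht hg₀ hg
  simp only [sq]
  refine (hΔ.mul hΔ).mono (fun θ _ θ' _ ↦ l1Dist_nonneg θ θ') le_rfl ?_
  nlinarith [pow_le_pow_left₀ zero_le_two hK 3]

/-- Lemma 1 (Lipschitz property of the empirical contrast dₙ):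
    |dₙ(θ) − dₙ(θ')| ≤ 16δ⁻⁴(|α−α'| + |β−β'|). -/
theorem empirical_contrast_lipschitz
    {E : Type*} [MeasurableSpace E] (H : Measure (E × E)) [IsProbabilityMeasure H]
    (δ : ℝ) (hδ0 : 0 < δ) (hδ : δ < 1/2)
    (F0 : E → ℝ) (G0 : E × E → ℝ) (Fhat : E → ℝ) (Ghat : E × E → ℝ)
    (hF0m : Measurable F0) (hG0m : Measurable G0)
    (hFhm : Measurable Fhat) (hGhm : Measurable Ghat)
    (hF0 : ∀ x, F0 x ∈ Set.Icc (0:ℝ) 1)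
    (hFhat : ∀ x, Fhat x ∈ Set.Icc (0:ℝ) 1)
    (hG0 : ∀ z, G0 z ∈ Set.Icc (0:ℝ) 1)
    (hGhat : ∀ z, Ghat z ∈ Set.Icc (0:ℝ) 1)
    (Fh1 : ℝ × ℝ → E → ℝ)
    (hFh1 : ∀ (α β : ℝ) (x : E),
      Fh1 (α, β) x = (Fhat x - (β/(α+β)) * F0 x) / (α/(α+β)))
    (Δn : ℝ × ℝ → E × E → ℝ)
    (hΔn : ∀ (α β : ℝ) (x y : E),
      Δn (α, β) (x, y) = Ghat (x,y) - ((β*(1-α)/(α+β)) * G0 (x,y)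
        + (α*β/(α+β)) * F0 x * Fh1 (α, β) y
        + (α*β/(α+β)) * Fh1 (α, β) x * F0 y
        + (α*(1-β)/(α+β)) * Fh1 (α, β) x * Fh1 (α, β) y))
    (dn : ℝ × ℝ → ℝ)
    (hdn : ∀ θ : ℝ × ℝ, dn θ = ∫ z, (Δn θ z)^2 ∂H) :
    ∀ α β α' β' : ℝ,
      α ∈ Set.Icc δ (1-δ) → β ∈ Set.Icc δ (1-δ) →
      α' ∈ Set.Icc δ (1-δ) → β' ∈ Set.Icc δ (1-δ) →
      |dn (α, β) - dn (α', β')| ≤ 16 * δ⁻¹^4 * (|α - α'| + |β - β'|) := by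
  intro α β α' β' hα hβ hα' hβ'
  set residual : ℝ × ℝ → E × E → ℝ := fun θ z ↦
    contrastResidual (F0 z.1) (F0 z.2) (Fhat z.1) (Fhat z.2) (G0 z) (Ghat z) θ
  have hdn_eq : ∀ θ ∈ paramSquare δ, dn θ = ∫ z, residual θ z ^ 2 ∂H := by
    rintro ⟨a, b⟩ ⟨ha, hb⟩
    have ha₀ : a ≠ 0 := (hδ0.trans_le ha.1).ne'
    have hab : a + b ≠ 0 := (add_pos (hδ0.trans_le ha.1) (hδ0.trans_le hb.1)).ne'
    rw [hdn]
    congr 1 with ⟨x, y⟩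
    rw [hΔn, hFh1, hFh1, contrastResidual_eq ha₀ hab]
  have hmeas : ∀ θ, AEStronglyMeasurable (fun z ↦ residual θ z ^ 2) H := fun θ ↦ by
    simp only [residual, contrastResidual]
    fun_prop
  have hd := BoundedLipschitzOn.integral (fun θ _ ↦ hmeas θ) fun z ↦
    boundedLipschitzOn_contrastResidual_sq hδ0 hδ (hF0 z.1) (hF0 z.2) (hFhat z.1) (hFhat z.2)
      (hG0 z) (hGhat z)
  rw [hdn_eq _ ⟨hα, hβ⟩, hdn_eq _ ⟨hα', hβ'⟩]
  exact hd.abs_sub_le _ ⟨hα, hβ⟩ _ ⟨hα', hβ'⟩
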